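/- arXiv:1203.1238 — 2 statements merged into one kernel-verified Lean document; each statement's English description precedes it below -/
import Mathlib

section
/- Measuring implies the negation of Weak Club Guessing: if measuring holds, then for every ladder system (C_δ)_{δ ∈ Lim ∩ ω₁} there is a club C ⊆ ω₁ such that C ∩ C_δ is finite for every δ ∈ C. -/
noncomputable def omega1 : Ordinal := (Cardinal.aleph 1).ord

def IsLimitPointOf (X : Set Ordinal) (x : Ordinal) : Prop :=
  ∀ α < x, ∃ ε ∈ X, α < ε ∧ ε < x

def IsClosedIn (C : Set Ordinal) (δ : Ordinal) : Prop :=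
  C ⊆ Set.Iio δ ∧ ∀ x, x ≠ 0 → x < δ → IsLimitPointOf C x → x ∈ C

def IsClubIn (C : Set Ordinal) (δ : Ordinal) : Prop :=
  IsClosedIn C δ ∧ ∀ α < δ, ∃ ε ∈ C, α < ε

def IsClubOrd (C : Set Ordinal) : Prop := IsClubIn C omega1

def Measures (C : Set Ordinal) (Cs : Ordinal.{0} → Set Ordinal.{0}) : Prop :=
  ∀ δ ∈ C, ∃ α < δ,
    (∀ x ∈ C, x < δ → α ≤ x → x ∈ Cs δ) ∨ (∀ x ∈ C, α ≤ x → x ∉ Cs δ)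


def Measuring : Prop :=
  ∀ Cs : Ordinal.{0} → Set Ordinal.{0}, (∀ δ < omega1, IsClosedIn (Cs δ) δ) →
    ∃ C, IsClubOrd C ∧ Measures C Cs

/-
Apply measuring to the ladder system itself: a ladder has order type `ω`, so it has no limit points
below its top and is closed. Measuring yields a club `C` which, at each `δ ∈ C`, either eventually
lies inside `C_δ` or eventually avoids it. Pass to the club `C'` of limit points of `C`. In the
second case a tail of `C' ⊆ C` misses `C_δ`; in the first case a point of `C' ∩ C_δ` above the
threshold would be a limit point of `C_δ`, which is impossible. Either way `C' ∩ C_δ` lies below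
the threshold, and every bounded part of a ladder is finite.
-/

open Set

def IsLadderAt (S : Set Ordinal) (δ : Ordinal) : Prop :=
  S ⊆ Iio δ ∧ (∀ α < δ, ∃ ε ∈ S, α < ε) ∧ ∃ f : ℕ → Ordinal, StrictMono f ∧ range f = S

lemma StrictMono.finite_range_inter_Iic {α : Type*} [Preorder α] {f : ℕ → α}
    (hf : StrictMono f) {x : α} {n : ℕ} (hxn : x < f n) : (range f ∩ Iic x).Finite := by
  refine ((finite_Iio n).image f).subset ?_
  rintro _ ⟨⟨m, rfl⟩, hm⟩
  exact ⟨m, hf.lt_iff_lt.mp (lt_of_le_of_lt hm hxn), rfl⟩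

lemma IsLimitPointOf.infinite_inter_Iio {S : Set Ordinal} {x : Ordinal}
    (h : IsLimitPointOf S x) (hx : x ≠ 0) : (S ∩ Iio x).Infinite := by
  intro hfin
  have hT : (insert 0 (S ∩ Iio x)).Finite := hfin.insert 0
  have hsup : sSup (insert 0 (S ∩ Iio x)) < x :=
    (hT.csSup_lt_iff (insert_nonempty _ _)).2 <| forall_mem_insert.2
      ⟨pos_iff_ne_zero.2 hx, fun _ hy => hy.2⟩
  obtain ⟨ε, hεS, hsupε, hεx⟩ := h _ hsup
  exact hsupε.not_ge (le_csSup hT.bddAbove (mem_insert_of_mem 0 ⟨hεS, hεx⟩))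

lemma IsLimitPointOf.of_tail {C S : Set Ordinal} {x α : Ordinal} (h : IsLimitPointOf C x)
    (hαx : α < x) (htail : ∀ y ∈ C, y < x → α ≤ y → y ∈ S) : IsLimitPointOf S x := by
  intro β hβx
  obtain ⟨ε, hεC, hβε, hεx⟩ := h (max β α) (max_lt hβx hαx)
  exact ⟨ε, htail ε hεC hεx (le_of_max_le_right hβε.le), (le_max_left β α).trans_lt hβε, hεx⟩

lemma isClosedIn_empty (δ : Ordinal) : IsClosedIn ∅ δ :=
  ⟨empty_subset _, fun x hx0 _ h => by simpa using (h.infinite_inter_Iio hx0).nonempty⟩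

namespace IsLadderAt

variable {S : Set Ordinal} {δ : Ordinal}

lemma finite_inter_Iic (h : IsLadderAt S δ) {x : Ordinal} (hx : x < δ) :
    (S ∩ Iic x).Finite := by
  obtain ⟨-, hcof, f, hf, rfl⟩ := h
  obtain ⟨_, ⟨n, rfl⟩, hxn⟩ := hcof x hx
  exact hf.finite_range_inter_Iic hxn

lemma not_isLimitPointOf (h : IsLadderAt S δ) {x : Ordinal} (hx0 : x ≠ 0) (hx : x < δ) :
    ¬ IsLimitPointOf S x := fun hlim =>
  hlim.infinite_inter_Iio hx0 <|
    (h.finite_inter_Iic hx).subset (inter_subset_inter_right S Iio_subset_Iic_self)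

lemma isClosedIn (h : IsLadderAt S δ) : IsClosedIn S δ :=
  ⟨h.1, fun _ hx0 hx hlim => absurd hlim (h.not_isLimitPointOf hx0 hx)⟩

end IsLadderAt

-- `0` is excluded: it is vacuously a limit point of every set.
def limitPoints (C : Set Ordinal) : Set Ordinal :=
  {x | x < omega1 ∧ x ≠ 0 ∧ IsLimitPointOf C x}

lemma limitPoints_subset {C : Set Ordinal} (hC : IsClosedIn C omega1) : limitPoints C ⊆ C :=
  fun x hx => hC.2 x hx.2.1 hx.1 hx.2.2

lemma isClosedIn_limitPoints (C : Set Ordinal) : IsClosedIn (limitPoints C) omega1 := by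
  refine ⟨fun x hx => hx.1, fun x hx0 hx hlim => ⟨hx, hx0, fun β hβx => ?_⟩⟩
  obtain ⟨ε, hε, hβε, hεx⟩ := hlim β hβx
  obtain ⟨ε', hε'C, hβε', hε'ε⟩ := hε.2.2 β hβε
  exact ⟨ε', hε'C, hβε', hε'ε.trans hεx⟩

lemma nfp_lt_omega1 {f : Ordinal → Ordinal} (hf : ∀ β < omega1, f β < omega1)
    {α : Ordinal} (hα : α < omega1) : Ordinal.nfp f α < omega1 :=
  Cardinal.nfp_lt_ord_of_isRegular Cardinal.isRegular_aleph_one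
    Cardinal.aleph0_lt_aleph_one.ne' hf hα

lemma IsClubOrd.exists_limitPoints_gt {C : Set Ordinal} (hC : IsClubOrd C) {α : Ordinal}
    (hα : α < omega1) : ∃ ε ∈ limitPoints C, α < ε := by
  -- Iterate "next element of `C`" ω times starting from `α`.
  set next : Ordinal → Ordinal := fun β => sInf (C ∩ Ioi β)
  have hnext : ∀ β < omega1, next β ∈ C ∩ Ioi β := fun β hβ =>
    csInf_mem (let ⟨ε, hεC, hβε⟩ := hC.2 β hβ; ⟨ε, hεC, hβε⟩)
  have hnext_lt : ∀ β < omega1, next β < omega1 := fun β hβ => hC.1.1 (hnext β hβ).1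
  have hiter : ∀ n, next^[n] α < omega1 := fun n => by
    induction n with
    | zero => exact hα
    | succ n ih => rw [Function.iterate_succ_apply']; exact hnext_lt _ ih
  have hstep : ∀ n, next^[n + 1] α ∈ C ∩ Ioi (next^[n] α) := fun n => by
    rw [Function.iterate_succ_apply']; exact hnext _ (hiter n)
  have hlt_nfp : ∀ n, next^[n] α < Ordinal.nfp next α := fun n =>
    (hstep n).2.trans_le (Ordinal.iterate_le_nfp next α (n + 1))
  refine ⟨Ordinal.nfp next α, ⟨nfp_lt_omega1 hnext_lt hα, (hlt_nfp 0).ne_bot, ?_⟩,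
    hlt_nfp 0⟩
  intro β hβ
  obtain ⟨n, hn⟩ := Ordinal.lt_nfp_iff.1 hβ
  exact ⟨_, (hstep n).1, hn.trans (hstep n).2, hlt_nfp (n + 1)⟩

lemma IsClubOrd.limitPoints {C : Set Ordinal} (hC : IsClubOrd C) : IsClubOrd (limitPoints C) :=
  ⟨isClosedIn_limitPoints C, fun _ hα => hC.exists_limitPoints_gt hα⟩

/-- Measuring implies the negation of Weak Club Guessing: for every ladder system
`(C_δ)_{δ ∈ Lim ∩ ω₁}` there is a club `C ⊆ ω₁` with `C ∩ C_δ` finite for all `δ ∈ C`. -/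
theorem measuring_implies_neg_weak_club_guessing (hM : Measuring)
    (Cs : Ordinal.{0} → Set Ordinal.{0})
    (hladder : ∀ δ, δ < omega1 → Order.IsSuccLimit δ →
      Cs δ ⊆ Set.Iio δ ∧ (∀ α < δ, ∃ ε ∈ Cs δ, α < ε) ∧
      ∃ f : ℕ → Ordinal, StrictMono f ∧ Set.range f = Cs δ) :
    ∃ C, IsClubOrd C ∧ ∀ δ ∈ C, Order.IsSuccLimit δ → (C ∩ Cs δ).Finite := by
  classical
  let Ds : Ordinal → Set Ordinal := fun δ => if δ < omega1 ∧ Order.IsSuccLimit δ then Cs δ else ∅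
  have hDs : ∀ δ < omega1, IsClosedIn (Ds δ) δ := fun δ _ => by
    by_cases h : δ < omega1 ∧ Order.IsSuccLimit δ
    · simpa only [Ds, if_pos h] using IsLadderAt.isClosedIn (hladder δ h.1 h.2)
    · simpa only [Ds, if_neg h] using isClosedIn_empty δ
  obtain ⟨C, hC, hCDs⟩ := hM Ds hDs
  refine ⟨limitPoints C, hC.limitPoints, fun δ hδ hlim => ?_⟩
  have hlad : IsLadderAt (Cs δ) δ := hladder δ hδ.1 hlim
  obtain ⟨α, hαδ, htail⟩ := hCDs δ (limitPoints_subset hC.1 hδ)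
  simp only [Ds, if_pos (And.intro hδ.1 hlim)] at htail
  refine (hlad.finite_inter_Iic hαδ).subset fun x ⟨hxC, hxS⟩ =>
    ⟨hxS, mem_Iic.2 <| not_lt.1 fun hαx => ?_⟩
  rcases htail with hin | hout
  · exact hlad.not_isLimitPointOf hxC.2.1 (hlad.1 hxS) <|
      hxC.2.2.of_tail hαx fun y hy hyx => hin y hy (hyx.trans (hlad.1 hxS))
  · exact hout x (limitPoints_subset hC.1 hxC) hαx.le hxS
end

section
/- Suppose 𝒩₀ = {N⁰_i : i < m} and 𝒩₁ = {N¹_i : i < m} are two finite families of countable sets with (⋃𝒩₀) ∩ (⋃𝒩₁) = X, and there is an isomorphism Ψ : ⟨⋃𝒩₀, ∈, X, N⁰_i⟩_{i<m} → ⟨⋃𝒩₁, ∈, X, N¹_i⟩_{i<m} fixing X pointwise. If i₀, i₁ < m are such that there is a (unique) isomorphism Ψ_{N⁰_{i₀}, N¹_{i₁}} : N⁰_{i₀} → N¹_{i₁}, and the unique isomorphism Ψ_{N⁰_{i₀}, N⁰_{i₁}} : N⁰_{i₀} → N⁰_{i₁} fixes Ord ∩ N⁰_{i₀} ∩ N⁰_{i₁},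 then Ψ_{N⁰_{i₀}, N¹_{i₁}} fixes every ordinal γ ∈ Ord ∩ N⁰_{i₀} ∩ N¹_{i₁}. -/
/-- Fact 2.3 (key step): given two finite families `𝒩₀ = {N⁰_i : i < m}`,
`𝒩₁ = {N¹_i : i < m}` of countable sets with `(⋃𝒩₀) ∩ (⋃𝒩₁) = X` and an
isomorphism `Ψ : ⟨⋃𝒩₀, ∈, X, N⁰_i⟩ → ⟨⋃𝒩₁, ∈, X, N¹_i⟩` fixing `X` pointwise,
if `Ψ₀₁` is the isomorphism `N⁰_{i₀} → N⁰_{i₁}` and it fixes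
`Ord ∩ N⁰_{i₀} ∩ N⁰_{i₁}`, then the isomorphism
`Ψ_{N⁰_{i₀}, N¹_{i₁}} = (Ψ ↾ N⁰_{i₁}) ∘ Ψ₀₁` fixes every ordinal in
`N⁰_{i₀} ∩ N¹_{i₁}`. -/
theorem amalgamation_fixes_ordinals (m : ℕ) (N0 N1 : Fin m → ZFSet)
    (hc0 : ∀ i, (N0 i).toSet.Countable) (hc1 : ∀ i, (N1 i).toSet.Countable)
    (Ψ Ψ01 : ZFSet → ZFSet) (i0 i1 : Fin m)
    (U0 : Set ZFSet) (hU0 : U0 = {x | ∃ i, x ∈ N0 i})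
    (U1 : Set ZFSet) (hU1 : U1 = {x | ∃ i, x ∈ N1 i})
    (X : Set ZFSet) (hX : X = U0 ∩ U1)
    (hbij : Set.BijOn Ψ U0 U1)
    (hmem : ∀ x ∈ U0, ∀ y ∈ U0, (x ∈ y ↔ Ψ x ∈ Ψ y))
    (hpred : ∀ x ∈ U0, ∀ i : Fin m, (x ∈ N0 i ↔ Ψ x ∈ N1 i))
    (hfixX : ∀ x ∈ X, Ψ x = x)
    (hbij01 : Set.BijOn Ψ01 (N0 i0).toSet (N0 i1).toSet)
    (hmem01 : ∀ x ∈ N0 i0, ∀ y ∈ N0 i0, (x ∈ y ↔ Ψ01 x ∈ Ψ01 y))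
    (hfix01 : ∀ γ, γ.IsOrdinal → γ ∈ N0 i0 → γ ∈ N0 i1 → Ψ01 γ = γ) :
    ∀ γ, γ.IsOrdinal → γ ∈ N0 i0 → γ ∈ N1 i1 → Ψ (Ψ01 γ) = γ := by
  intro γ hord h0 h1
  have hγU0 : γ ∈ U0 := by rw [hU0]; exact ⟨i0, h0⟩
  have hγX : γ ∈ X := by
    rw [hX]; exact ⟨hγU0, by rw [hU1]; exact ⟨i1, h1⟩⟩
  have hΨγ : Ψ γ = γ := hfixX γ hγX
  have h01 : γ ∈ N0 i1 := (hpred γ hγU0 i1).mpr (by rw [hΨγ]; exact h1)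
  rw [hfix01 γ hord h0 h01, hΨγ]
end
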